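/- Let (X, D) be a locally compact, complete metric space, α > 1, and Ω ⊆ X an open set with D_α(Ω) ≠ ∅. Let (d_n)_{n∈ℕ} ⊆ D_α(Ω) and d ∈ D_α(Ω). Suppose the functionals J_{d_n} Γ-converge to J_d on B(Ω), i.e.: (liminf) for every sequence (μ_n) ⊆ B(Ω) converging weakly* to μ ∈ B(Ω) one has J_d(μ) ≤ liminf_n J_{d_n}(μ_n); (limsup) for every μ ∈ B(Ω) there exists (μ_n) ⊆ B(Ω) converging weakly* to μ with limsup_n J_{d_n}(μ_n) ≤ J_d(μ). Then d_n → d uniformly on compact subsets of Ω × Ω. -/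

import Mathlib

/-!
Testing the Γ-liminf inequality on constant sequences of Dirac masses gives
`d ≤ liminf dₙ` pointwise. For the reverse inequality at `z = (x, y)`, take a recovery sequence
`μₙ ⇀ δ_z` and the tent function `g = (1 - dist · z / r)⁺`, which lies in `C₀(Ω × Ω)` for small `r`
because `Ω` is open in a locally compact space. The distances are uniformly `2α`-Lipschitz on
`Ω × Ω`, so `dₙ ≥ dₙ z - 2αr` on the support of `g`, whence
`(dₙ z - 2αr) ∫ g dμₙ ≤ J_{dₙ}(μₙ)`; as `∫ g dμₙ → 1` this yields `limsup dₙ z ≤ d z + 2αr`.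
Finally, pointwise convergence of an equicontinuous family is uniform on compact sets.
-/

open Filter MeasureTheory Set
open scoped ENNReal Topology

/-- Length of the curve `γ` on the interval `[a, b]`, with respect to the
(candidate) distance `d`, defined as a supremum over finite partitions. -/
noncomputable def pathLengthOn {E : Type*} (d : E → E → ℝ) (γ : ℝ → E) (a b : ℝ) : ℝ≥0∞ :=
  ⨆ (k : ℕ) (t : Fin (k + 1) → ℝ) (_ : Monotone t) (_ : t 0 = a) (_ : t (Fin.last k) = b),
    ∑ i : Fin k, ENNReal.ofReal (d (γ (t i.succ)) (γ (t i.castSucc)))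

/-- Length of the curve `γ : [0,1] → E` with respect to `d`. -/
noncomputable def pathLength {E : Type*} (d : E → E → ℝ) (γ : ℝ → E) : ℝ≥0∞ :=
  pathLengthOn d γ 0 1

/-- `d` is a distance on `E`. -/
def IsDistance {E : Type*} (d : E → E → ℝ) : Prop :=
  (∀ x y, d x y = d y x) ∧ (∀ x y z, d x z ≤ d x y + d y z) ∧ ∀ x y, d x y = 0 ↔ x = y

/-- `γ : [0,1] → E` is a Lipschitz curve with respect to `d`. -/
def LipCurve {E : Type*} (d : E → E → ℝ) (γ : ℝ → E) : Prop :=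
  ∃ K : ℝ, ∀ s ∈ Icc (0 : ℝ) 1, ∀ t ∈ Icc (0 : ℝ) 1, d (γ s) (γ t) ≤ K * |s - t|

/-- `(E, d)` is a length space: `d x y` is the infimum of lengths of Lipschitz
curves `γ : [0,1] → E` joining `x` to `y`. -/
def IsLengthDist {E : Type*} (d : E → E → ℝ) : Prop :=
  ∀ x y : E, ENNReal.ofReal (d x y) =
    ⨅ (γ : ℝ → E) (_ : LipCurve d γ) (_ : γ 0 = x) (_ : γ 1 = y), pathLength d γ

/-- `d ∈ 𝒟_α(Ω)` : `d` is a distance on `Ω` making it a length space and satisfying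
`α⁻¹ D ≤ d ≤ α D`. -/
def MemD {X : Type*} [MetricSpace X] (α : ℝ) (Ω : Set X) (d : Ω → Ω → ℝ) : Prop :=
  IsDistance d ∧ IsLengthDist d ∧
    ∀ x y : Ω, α⁻¹ * dist (x : X) (y : X) ≤ d x y ∧ d x y ≤ α * dist (x : X) (y : X)

/-- Uniform convergence `dn → d` on compact subsets of `E × E`. -/
def TendstoUnifCompactly {E : Type*} [TopologicalSpace E]
    (dn : ℕ → E → E → ℝ) (d : E → E → ℝ) : Prop :=
  ∀ K : Set (E × E), IsCompact K → ∀ ε : ℝ, 0 < ε →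
    ∃ N : ℕ, ∀ n ≥ N, ∀ p ∈ K, |dn n p.1 p.2 - d p.1 p.2| < ε

/-- `e` is a continuous extension of `d : Ω → Ω → ℝ` to the closure of `Ω`. -/
def IsContExt {X : Type*} [MetricSpace X] (Ω : Set X) (d : Ω → Ω → ℝ)
    (e : closure Ω → closure Ω → ℝ) : Prop :=
  Continuous (fun p : closure Ω × closure Ω => e p.1 p.2) ∧
    ∀ x y : Ω, e ⟨x, subset_closure x.2⟩ ⟨y, subset_closure y.2⟩ = d x y

/-- `(E, d)` is a geodesic space: any two points are joined by a constant-speed curve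
`γ : [0,1] → E` whose length on each subinterval `[t,s]` equals `d (γ t) (γ s)`. -/
def IsGeodesicDist {E : Type*} (d : E → E → ℝ) : Prop :=
  ∀ x y : E, ∃ γ : ℝ → E, γ 0 = x ∧ γ 1 = y ∧
    (∀ t s : ℝ, 0 ≤ t → t ≤ s → s ≤ 1 →
      pathLengthOn d γ t s = pathLength d γ * ENNReal.ofReal (s - t)) ∧
    ∀ t s : ℝ, 0 ≤ t → t ≤ s → s ≤ 1 →
      pathLengthOn d γ t s = ENNReal.ofReal (d (γ t) (γ s))

/-- Uniform convergence on `[0,1]` of a sequence of curves. -/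
def UnifConvCurves {E : Type*} [MetricSpace E] (γn : ℕ → ℝ → E) (γ : ℝ → E) : Prop :=
  ∀ ε : ℝ, 0 < ε → ∃ N : ℕ, ∀ n ≥ N, ∀ t ∈ Icc (0 : ℝ) 1, dist (γn n t) (γ t) < ε

/-- Γ-convergence of the length functionals `L_{dn}` to `L_d` on the space of
Lipschitz curves `[0,1] → E` with the topology of uniform convergence. -/
def GammaConvLengths {E : Type*} [MetricSpace E] (dn : ℕ → E → E → ℝ) (d : E → E → ℝ) : Prop :=
  (∀ (γn : ℕ → ℝ → E) (γ : ℝ → E),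
      (∀ n, LipCurve (fun x y : E => dist x y) (γn n)) →
      LipCurve (fun x y : E => dist x y) γ → UnifConvCurves γn γ →
      pathLength d γ ≤ liminf (fun n => pathLength (dn n) (γn n)) atTop) ∧
  ∀ γ : ℝ → E, LipCurve (fun x y : E => dist x y) γ →
    ∃ γn : ℕ → ℝ → E, (∀ n, LipCurve (fun x y : E => dist x y) (γn n)) ∧
      UnifConvCurves γn γ ∧
      limsup (fun n => pathLength (dn n) (γn n)) atTop ≤ pathLength d γ

/-- Weak* convergence of finite Borel measures, tested against `C₀` functions. -/
def WeakStarConv {Y : Type*} [TopologicalSpace Y] [MeasurableSpace Y]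
    (μn : ℕ → Measure Y) (μ : Measure Y) : Prop :=
  ∀ f : ZeroAtInftyContinuousMap Y ℝ,
    Tendsto (fun n => ∫ y, f y ∂ μn n) atTop (𝓝 (∫ y, f y ∂ μ))

/-- The functional `J_d(μ) = ∫ d(x,y) dμ(x,y)`. -/
noncomputable def Jfun {X : Type*} [MetricSpace X] {Ω : Set X} [MeasurableSpace X]
    (d : Ω → Ω → ℝ) (μ : Measure (Ω × Ω)) : ℝ≥0∞ :=
  ∫⁻ p, ENNReal.ofReal (d p.1 p.2) ∂ μ

open Metric
open scoped NNReal

lemma IsDistance.nonneg {E : Type*} {d : E → E → ℝ} (hd : IsDistance d) (x y : E) : 0 ≤ d x y := by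
  have h := hd.2.1 x y x
  rw [(hd.2.2 x x).2 rfl, hd.1 y x] at h
  linarith

lemma IsDistance.lipschitzWith_uncurry {E : Type*} [PseudoMetricSpace E] {d : E → E → ℝ} {C : ℝ}
    (hd : IsDistance d) (hC : ∀ x y, d x y ≤ C * dist x y) :
    LipschitzWith (2 * C.toNNReal) (fun p : E × E => d p.1 p.2) := by
  have hC' : ∀ x y, d x y ≤ C.toNNReal * dist x y := fun x y =>
    (hC x y).trans (mul_le_mul_of_nonneg_right (Real.le_coe_toNNReal C) dist_nonneg)
  have key : ∀ p q : E × E, d p.1 p.2 - d q.1 q.2 ≤ 2 * C.toNNReal * dist p q := by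
    intro p q
    have h₁ := hd.2.1 p.1 q.1 p.2
    have h₂ := hd.2.1 q.1 q.2 p.2
    rw [hd.1 q.2 p.2] at h₂
    have h₃ : dist p.1 q.1 ≤ dist p q := by rw [Prod.dist_eq]; exact le_max_left _ _
    have h₄ : dist p.2 q.2 ≤ dist p q := by rw [Prod.dist_eq]; exact le_max_right _ _
    nlinarith [hC' p.1 q.1, hC' p.2 q.2, C.toNNReal.2]
  refine LipschitzWith.of_dist_le_mul fun p q => ?_
  rw [Real.dist_eq, abs_sub_le_iff]
  push_cast
  exact ⟨key p q, dist_comm q p ▸ key q p⟩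

lemma MemD.lipschitzWith_uncurry {X : Type*} [MetricSpace X] {α : ℝ} {Ω : Set X}
    {d : Ω → Ω → ℝ} (hd : MemD α Ω d) :
    LipschitzWith (2 * α.toNNReal) (fun p : Ω × Ω => d p.1 p.2) :=
  hd.1.lipschitzWith_uncurry fun x y => (hd.2.2 x y).2

theorem EquicontinuousOn.tendstoUniformlyOn_of_tendsto {ι Z β : Type*} [TopologicalSpace Z]
    [UniformSpace β] {l : Filter ι} {F : ι → Z → β} {f : Z → β} {K : Set Z}
    (hF : EquicontinuousOn F K) (hK : IsCompact K)
    (h : ∀ z ∈ K, Tendsto (fun i => F i z) l (𝓝 (f z))) : TendstoUniformlyOn F f l K := by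
  have := (EquicontinuousOn.tendsto_uniformOnFun_iff_pi' (𝔖 := {K}) (by simpa using hK)
    (by simpa using hF) l f).2 (by simpa [tendsto_pi_nhds] using h)
  exact UniformOnFun.tendsto_iff_tendstoUniformlyOn.1 this K rfl

lemma tendstoUnifCompactly_iff {E : Type*} [TopologicalSpace E] {dn : ℕ → E → E → ℝ}
    {d : E → E → ℝ} : TendstoUnifCompactly dn d ↔ ∀ K : Set (E × E), IsCompact K →
      TendstoUniformlyOn (fun n p => dn n p.1 p.2) (fun p => d p.1 p.2) atTop K := by
  simp only [TendstoUnifCompactly, Metric.tendstoUniformlyOn_iff, eventually_atTop, Real.dist_eq,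
    abs_sub_comm]

lemma eventually_lt_of_mul_lt {ι : Type*} {l : Filter ι} {u v : ι → ℝ} {b b' : ℝ} (hb : 0 < b)
    (hbb' : b < b') (hv : Tendsto v l (𝓝 1)) (h : ∀ᶠ i in l, u i * v i < b) :
    ∀ᶠ i in l, u i < b' := by
  have hq : b / b' < 1 := (div_lt_one (hb.trans hbb')).2 hbb'
  filter_upwards [h, hv.eventually (lt_mem_nhds hq)] with i huv hvi
  by_contra! hu
  have hb' : b' * (b / b') = b := mul_div_cancel₀ b (hb.trans hbb').ne'
  nlinarith [div_pos hb (hb.trans hbb')]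

section Tent

variable {Z : Type*} [PseudoMetricSpace Z] {z p : Z} {r : ℝ}

noncomputable def tent (z : Z) (r : ℝ) (p : Z) : ℝ := max 0 (1 - dist p z / r)

lemma tent_nonneg : 0 ≤ tent z r p := le_max_left _ _

lemma tent_le_one (hr : 0 < r) : tent z r p ≤ 1 :=
  max_le zero_le_one (by have := div_nonneg (dist_nonneg (x := p) (y := z)) hr.le; linarith)

@[simp] lemma tent_self : tent z r z = 1 := by simp [tent]

lemma tent_eq_zero (hr : 0 < r) (h : r ≤ dist p z) : tent z r p = 0 :=
  max_eq_left (by rw [sub_nonpos, le_div_iff₀ hr]; linarith)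

lemma continuous_tent : Continuous (tent z r) := by
  unfold tent; fun_prop

lemma hasCompactSupport_tent (hr : 0 < r) (hK : IsCompact (closedBall z r)) :
    HasCompactSupport (tent z r) :=
  HasCompactSupport.intro' hK isClosed_closedBall fun _ hp =>
    tent_eq_zero hr (le_of_lt (not_le.1 hp))

lemma sub_mul_tent_le {F : Z → ℝ} {L : ℝ≥0} (hF : ∀ p, 0 ≤ F p) (hFL : LipschitzWith L F)
    (hr : 0 < r) (p : Z) : (F z - L * r) * tent z r p ≤ F p := by
  rcases lt_or_ge (dist p z) r with hpz | hpz
  · rcases le_or_gt (F z - L * r) 0 with hc | hc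
    · exact (mul_nonpos_of_nonpos_of_nonneg hc tent_nonneg).trans (hF p)
    · have hlip : F z - F p ≤ L * r := by
        have := hFL.dist_le_mul z p
        rw [Real.dist_eq, dist_comm] at this
        nlinarith [le_abs_self (F z - F p), L.2]
      nlinarith [tent_le_one (z := z) (p := p) hr]
  · rw [tent_eq_zero hr hpz, mul_zero]
    exact hF p

lemma ofReal_sub_mul_integral_tent_le [MeasurableSpace Z] (μ : Measure Z) [IsFiniteMeasure μ]
    {F : Z → ℝ} {L : ℝ≥0} (hF : ∀ p, 0 ≤ F p) (hFL : LipschitzWith L F) (hr : 0 < r)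
    (hmeas : Measurable (tent z r)) :
    ENNReal.ofReal ((F z - L * r) * ∫ p, tent z r p ∂μ) ≤ ∫⁻ p, ENNReal.ofReal (F p) ∂μ := by
  rcases le_or_gt (F z - L * r) 0 with hc | hc
  · rw [ENNReal.ofReal_of_nonpos (mul_nonpos_of_nonpos_of_nonneg hc
      (integral_nonneg fun _ => tent_nonneg))]
    exact zero_le
  have hint : Integrable (tent z r) μ :=
    Integrable.of_bound hmeas.aestronglyMeasurable 1 (.of_forall fun p => by
      rw [Real.norm_eq_abs, abs_of_nonneg tent_nonneg]; exact tent_le_one hr)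
  rw [← integral_const_mul, ofReal_integral_eq_lintegral_ofReal (hint.const_mul _)
    (.of_forall fun p => mul_nonneg hc.le tent_nonneg)]
  exact lintegral_mono fun p => ENNReal.ofReal_le_ofReal (sub_mul_tent_le hF hFL hr p)

end Tent

-- Without second countability the product σ-algebra on `Y × Y` may miss open sets, so
-- measurability is checked through the coordinates.
lemma measurable_tent_prod {Y : Type*} [PseudoMetricSpace Y] [MeasurableSpace Y]
    [OpensMeasurableSpace Y] (z : Y × Y) (r : ℝ) : Measurable (tent z r) := by
  have hdist : (fun p : Y × Y => dist p z) = fun p => max (dist p.1 z.1) (dist p.2 z.2) :=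
    funext fun _ => Prod.dist_eq
  have h₁ : Measurable fun y : Y => dist y z.1 := (continuous_id.dist continuous_const).measurable
  have h₂ : Measurable fun y : Y => dist y z.2 := (continuous_id.dist continuous_const).measurable
  have : Measurable fun p : Y × Y => dist p z := by
    rw [hdist]; exact (h₁.comp measurable_fst).max (h₂.comp measurable_snd)
  exact measurable_const.max (measurable_const.sub (this.div_const r))

section GammaConvergence

variable {Z : Type*} [TopologicalSpace Z] [MeasurableSpace Z]

def LintegralGammaLiminf (Fn : ℕ → Z → ℝ) (F : Z → ℝ) : Prop :=
  ∀ (μn : ℕ → Measure Z) (μ : Measure Z),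
    (∀ n, IsFiniteMeasure (μn n)) → IsFiniteMeasure μ → WeakStarConv μn μ →
    ∫⁻ p, ENNReal.ofReal (F p) ∂μ ≤ liminf (fun n => ∫⁻ p, ENNReal.ofReal (Fn n p) ∂μn n) atTop

def LintegralGammaLimsup (Fn : ℕ → Z → ℝ) (F : Z → ℝ) : Prop :=
  ∀ μ : Measure Z, IsFiniteMeasure μ →
    ∃ μn : ℕ → Measure Z, (∀ n, IsFiniteMeasure (μn n)) ∧ WeakStarConv μn μ ∧
      limsup (fun n => ∫⁻ p, ENNReal.ofReal (Fn n p) ∂μn n) atTop ≤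
        ∫⁻ p, ENNReal.ofReal (F p) ∂μ

lemma LintegralGammaLiminf.eventually_lt_apply [MeasurableSingletonClass Z] {F : Z → ℝ}
    {Fn : ℕ → Z → ℝ} (hliminf : LintegralGammaLiminf Fn F) (hFn : ∀ n p, 0 ≤ Fn n p) (z : Z)
    {a : ℝ} (ha : a < F z) : ∀ᶠ n in atTop, a < Fn n z := by
  have h := hliminf (fun _ => .dirac z) (.dirac z) (fun _ => inferInstance) inferInstance
    fun _ => tendsto_const_nhds
  simp only [lintegral_dirac] at h
  rcases lt_or_ge a 0 with ha₀ | ha₀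
  · exact .of_forall fun n => ha₀.trans_le (hFn n z)
  filter_upwards [eventually_lt_of_lt_liminf
    (((ENNReal.ofReal_lt_ofReal_iff_of_nonneg ha₀).2 ha).trans_le h)] with n hn
  exact (ENNReal.ofReal_lt_ofReal_iff_of_nonneg ha₀).1 hn

end GammaConvergence

lemma LintegralGammaLimsup.eventually_apply_lt {Y : Type*} [MetricSpace Y]
    [LocallyCompactSpace Y] [MeasurableSpace Y] [OpensMeasurableSpace Y] {F : Y × Y → ℝ}
    {Fn : ℕ → Y × Y → ℝ} {L : ℝ≥0} (hlimsup : LintegralGammaLimsup Fn F) (hF : ∀ p, 0 ≤ F p)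
    (hFn : ∀ n p, 0 ≤ Fn n p) (hlip : ∀ n, LipschitzWith L (Fn n)) (z : Y × Y) {a : ℝ}
    (ha : F z < a) : ∀ᶠ n in atTop, Fn n z < a := by
  -- The gap `c = a - F z` is split in thirds: the margin above `limsup`, the loss of mass
  -- `1 - ∫ tent dμₙ`, and the Lipschitz error `L * r`.
  set c := a - F z
  have hc : 0 < c := sub_pos.2 ha
  obtain ⟨r, ⟨hrK, hLr⟩, hr⟩ : ∃ r, (IsCompact (closedBall z r) ∧ L * r < c / 3) ∧ 0 < r := by
    have hsmall : ∀ᶠ r in 𝓝 (0 : ℝ), L * r < c / 3 :=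
      (continuous_const.mul continuous_id).tendsto' 0 0 (mul_zero _) |>.eventually
        (gt_mem_nhds (by positivity))
    have hsmall' : ∀ᶠ r in 𝓝[>] (0 : ℝ), (IsCompact (closedBall z r) ∧ L * r < c / 3) ∧ 0 < r :=
      (eventually_nhdsWithin_of_eventually_nhds ((eventually_isCompact_closedBall z).and
        hsmall)).and self_mem_nhdsWithin
    exact hsmall'.exists
  obtain ⟨μn, hμn, hconv, hls⟩ := hlimsup (.dirac z) inferInstance
  let g : ZeroAtInftyContinuousMap (Y × Y) ℝ :=
    ⟨⟨tent z r, continuous_tent⟩, (hasCompactSupport_tent hr hrK).is_zero_at_infty⟩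
  have hg : Tendsto (fun n => ∫ p, tent z r p ∂μn n) atTop (𝓝 1) := by
    simpa [g, integral_dirac] using hconv g
  have hJ : ∀ᶠ n in atTop,
      ∫⁻ p, ENNReal.ofReal (Fn n p) ∂μn n < ENNReal.ofReal (F z + c / 3) := by
    refine eventually_lt_of_limsup_lt (hls.trans_lt ?_)
    rw [lintegral_dirac, ENNReal.ofReal_lt_ofReal_iff (by linarith [hF z])]
    linarith
  have hprod : ∀ᶠ n in atTop, (Fn n z - L * r) * ∫ p, tent z r p ∂μn n < F z + c / 3 := by
    filter_upwards [hJ] with n hn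
    exact (ENNReal.ofReal_lt_ofReal_iff'.1 ((ofReal_sub_mul_integral_tent_le (μn n) (hFn n)
      (hlip n) hr (measurable_tent_prod z r)).trans_lt hn)).1
  filter_upwards [eventually_lt_of_mul_lt (b' := F z + 2 * c / 3) (by linarith [hF z])
    (by linarith) hg hprod] with n hn
  linarith

theorem LintegralGammaLiminf.tendsto_apply {Y : Type*} [MetricSpace Y]
    [LocallyCompactSpace Y] [MeasurableSpace Y] [OpensMeasurableSpace Y] {F : Y × Y → ℝ}
    {Fn : ℕ → Y × Y → ℝ} {L : ℝ≥0} (hliminf : LintegralGammaLiminf Fn F)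
    (hlimsup : LintegralGammaLimsup Fn F) (hF : ∀ p, 0 ≤ F p) (hFn : ∀ n p, 0 ≤ Fn n p)
    (hlip : ∀ n, LipschitzWith L (Fn n)) (z : Y × Y) :
    Tendsto (fun n => Fn n z) atTop (𝓝 (F z)) :=
  tendsto_order.2 ⟨fun _ ha => hliminf.eventually_lt_apply hFn z ha,
    fun _ ha => hlimsup.eventually_apply_lt hF hFn hlip z ha⟩

theorem stmt6_general {X : Type*} [MetricSpace X] [MeasurableSpace X] [BorelSpace X]
    [LocallyCompactSpace X]
    (Ω : Set X) (hΩ : IsOpen Ω) (α : ℝ)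
    (dn : ℕ → Ω → Ω → ℝ) (hdn : ∀ n, MemD α Ω (dn n))
    (d : Ω → Ω → ℝ) (hd : MemD α Ω d)
    (hliminf : ∀ (μn : ℕ → Measure (Ω × Ω)) (μ : Measure (Ω × Ω)),
      (∀ n, IsFiniteMeasure (μn n)) → IsFiniteMeasure μ → WeakStarConv μn μ →
      Jfun d μ ≤ liminf (fun n => Jfun (dn n) (μn n)) atTop)
    (hlimsup : ∀ μ : Measure (Ω × Ω), IsFiniteMeasure μ →
      ∃ μn : ℕ → Measure (Ω × Ω), (∀ n, IsFiniteMeasure (μn n)) ∧ WeakStarConv μn μ ∧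
        limsup (fun n => Jfun (dn n) (μn n)) atTop ≤ Jfun d μ) :
    TendstoUnifCompactly dn d := by
  have : LocallyCompactSpace Ω := hΩ.locallyCompactSpace
  have hlip n := (hdn n).lipschitzWith_uncurry
  have hpt := LintegralGammaLiminf.tendsto_apply hliminf hlimsup (fun p => hd.1.nonneg p.1 p.2)
    (fun n p => (hdn n).1.nonneg p.1 p.2) hlip
  refine tendstoUnifCompactly_iff.2 fun K hK => ?_
  exact ((LipschitzWith.uniformEquicontinuous _ _ hlip).equicontinuous.equicontinuousOn K
    ).tendstoUniformlyOn_of_tendsto hK fun p _ => hpt p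

/-- Γ-convergence of the functionals `J_{dn}` to `J_d` implies uniform
convergence of the distances on compact subsets of `Ω × Ω`. -/
theorem stmt6 {X : Type*} [MetricSpace X] [MeasurableSpace X] [BorelSpace X]
    [LocallyCompactSpace X] [CompleteSpace X]
    (Ω : Set X) (hΩ : IsOpen Ω) (α : ℝ) (hα : 1 < α)
    (hne : ∃ d₀ : Ω → Ω → ℝ, MemD α Ω d₀)
    (dn : ℕ → Ω → Ω → ℝ) (hdn : ∀ n, MemD α Ω (dn n))
    (d : Ω → Ω → ℝ) (hd : MemD α Ω d)
    (hliminf : ∀ (μn : ℕ → Measure (Ω × Ω)) (μ : Measure (Ω × Ω)),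
      (∀ n, IsFiniteMeasure (μn n)) → IsFiniteMeasure μ → WeakStarConv μn μ →
      Jfun d μ ≤ liminf (fun n => Jfun (dn n) (μn n)) atTop)
    (hlimsup : ∀ μ : Measure (Ω × Ω), IsFiniteMeasure μ →
      ∃ μn : ℕ → Measure (Ω × Ω), (∀ n, IsFiniteMeasure (μn n)) ∧ WeakStarConv μn μ ∧
        limsup (fun n => Jfun (dn n) (μn n)) atTop ≤ Jfun d μ) :
    TendstoUnifCompactly dn d :=
  stmt6_general Ω hΩ α dn hdn d hd hliminf hlimsup
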